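/- arXiv:1406.0862 — 8 statements merged into one kernel-verified Lean document; each statement's English description precedes it below -/
import Mathlib

section
/- (Iteration of the Fourier transform.) For all a, c ∈ A one has hh(F(c)·F(a)) = h(η)·h(S(a)·c), where the product on A* is (ω₁·ω₂)(x) = (ω₁⊗ω₂)(Δ(x)) and hh : A* → ℂ is the unique linear functional with hh(F(x)) = h(η)·ε(x) for all x ∈ A. Equivalently, the double Fourier transform F̂∘F (where F̂(φ) = hh(·φ) ∈ A**) equals h(η)·S under the canonical identification of A with A**. -/
open TensorProduct

noncomputable section

namespace QAG

variable {A : Type*} [Ring A] [HopfAlgebra ℂ A] [StarRing A] [StarModule ℂ A]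
  [FiniteDimensional ℂ A]

/-- `(h ⊗ id)` as a map `A ⊗ A → A`. -/
def hTensorId (h : A →ₗ[ℂ] ℂ) : A ⊗[ℂ] A →ₗ[ℂ] A :=
  (TensorProduct.lid ℂ A).toLinearMap ∘ₗ TensorProduct.map h LinearMap.id

/-- `(id ⊗ h)` as a map `A ⊗ A → A`. -/
def idTensorH (h : A →ₗ[ℂ] ℂ) : A ⊗[ℂ] A →ₗ[ℂ] A :=
  (TensorProduct.rid ℂ A).toLinearMap ∘ₗ TensorProduct.map LinearMap.id h

/-- The convolution product `a ⋆ b = (h ⊗ id)(((S ⊗ id)Δ(b))·(a ⊗ 1))`. -/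
def conv (h : A →ₗ[ℂ] ℂ) (a b : A) : A :=
  hTensorId h
    ((TensorProduct.map (HopfAlgebra.antipode (R := ℂ)) LinearMap.id
        (Coalgebra.comul (R := ℂ) b)) * (a ⊗ₜ[ℂ] (1 : A)))

/-- The Fourier transform `F(a) = h(·a)` as an element of the dual space. -/
def fourier (h : A →ₗ[ℂ] ℂ) (a : A) : Module.Dual ℂ A :=
  h ∘ₗ LinearMap.mulRight ℂ a

/-- The product of the dual algebra `A*`: `(ω₁·ω₂)(c) = (ω₁ ⊗ ω₂)(Δ(c))`. -/
def dualMul (φ ψ : Module.Dual ℂ A) : Module.Dual ℂ A :=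
  (TensorProduct.lid ℂ ℂ).toLinearMap ∘ₗ TensorProduct.map φ ψ ∘ₗ Coalgebra.comul (R := ℂ)


/-- iteration of the Fourier transform: if `η` is the Haar element and
`hh` is the dual Haar state (the unique functional with `hh(F(x)) = h(η)·ε(x)`), then
`hh(F(c)·F(a)) = h(η)·h(S(a)·c)`; i.e. the double Fourier transform equals `h(η)·S`. -/
theorem double_fourier_transform
    (h : A →ₗ[ℂ] ℂ)
    -- the antipode is an involution commuting with the `*`-operation
    (hSS : ∀ a : A, HopfAlgebra.antipode (R := ℂ) (HopfAlgebra.antipode (R := ℂ) a) = a)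
    (hSstar : ∀ a : A, HopfAlgebra.antipode (R := ℂ) (star a)
      = star (HopfAlgebra.antipode (R := ℂ) a))
    -- `h` is faithful, hermitian, tracial, `S`-invariant and (bi-)invariant
    (hfaithful : ∀ a : A, h (star a * a) = 0 → a = 0)
    (hhermitian : ∀ a : A, h (star a) = starRingEnd ℂ (h a))
    (htracial : ∀ a b : A, h (a * b) = h (b * a))
    (hSinv : ∀ a : A, h (HopfAlgebra.antipode (R := ℂ) a) = h a)
    (hinvl : ∀ a : A, hTensorId h (Coalgebra.comul (R := ℂ) a) = h a • (1 : A))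
    (hinvr : ∀ a : A, idTensorH h (Coalgebra.comul (R := ℂ) a) = h a • (1 : A))
    -- strong invariance
    (hstrong : ∀ b c : A,
      HopfAlgebra.antipode (R := ℂ)
          (idTensorH h ((Coalgebra.comul (R := ℂ) b) * ((1 : A) ⊗ₜ[ℂ] c)))
        = idTensorH h (((1 : A) ⊗ₜ[ℂ] b) * Coalgebra.comul (R := ℂ) c))
    -- the Haar element `η`
    (η : A) (hη₁ : Coalgebra.counit (R := ℂ) η = 1)
    (hη₂ : ∀ a : A, a * η = Coalgebra.counit (R := ℂ) a • η)
    -- the dual Haar state `hh`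
    (hh : Module.Dual ℂ (Module.Dual ℂ A))
    (hhh : ∀ x : A, hh (fourier h x) = h η * Coalgebra.counit (R := ℂ) x) :
    ∀ a c : A,
      hh (dualMul (fourier h c) (fourier h a))
        = h η * h (HopfAlgebra.antipode (R := ℂ) a * c) := by

  intro a c
  set S : A →ₗ[ℂ] A := HopfAlgebra.antipode (R := ℂ) with hS
  -- Step A: evaluate the dual product pointwise
  have stepA : ∀ t : A ⊗[ℂ] A,
      (TensorProduct.lid ℂ ℂ) (TensorProduct.map (fourier h c) (fourier h a) t)
        = h (idTensorH h (t * ((1 : A) ⊗ₜ[ℂ] a)) * c) := by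
    intro t
    induction t using TensorProduct.induction_on with
    | zero => simp
    | tmul x z =>
        simp [fourier, idTensorH, Algebra.TensorProduct.tmul_mul_tmul,
          TensorProduct.map_tmul, smul_mul_assoc, mul_comm]
    | add u v hu hv =>
        simp only [map_add, add_mul, map_add] at *
        rw [hu, hv]
  -- Step C: pointwise identity giving the convolution
  have stepC : ∀ (y : A) (t : A ⊗[ℂ] A),
      h (S (idTensorH h (((1 : A) ⊗ₜ[ℂ] y) * t)) * c)
        = h (y * hTensorId h ((TensorProduct.map S LinearMap.id t) * (c ⊗ₜ[ℂ] (1 : A)))) := by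
    intro y t
    induction t using TensorProduct.induction_on with
    | zero => simp
    | tmul x z =>
        simp [idTensorH, hTensorId, Algebra.TensorProduct.tmul_mul_tmul,
          TensorProduct.map_tmul, smul_mul_assoc, mul_smul_comm]
        ring
    | add u v hu hv =>
        simp only [mul_add, map_add, add_mul] at *
        rw [hu, hv]
  -- Step E: counit of the convolution
  have stepE : ∀ t : A ⊗[ℂ] A,
      Coalgebra.counit (R := ℂ)
          (hTensorId h ((TensorProduct.map S LinearMap.id t) * (c ⊗ₜ[ℂ] (1 : A))))
        = h (S ((TensorProduct.rid ℂ A) ((Coalgebra.counit (R := ℂ)).lTensor A t)) * c) := by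
    intro t
    induction t using TensorProduct.induction_on with
    | zero => simp
    | tmul x z =>
        simp [hTensorId, Algebra.TensorProduct.tmul_mul_tmul,
          TensorProduct.map_tmul, smul_mul_assoc, mul_comm]
    | add u v hu hv =>
        simp only [map_add, add_mul] at *
        rw [hu, hv]
  -- the dual product equals the Fourier transform of the convolution
  have key : dualMul (fourier h c) (fourier h a) = fourier h (conv h c a) := by
    apply LinearMap.ext
    intro y
    have hB : idTensorH h ((Coalgebra.comul (R := ℂ) y) * ((1 : A) ⊗ₜ[ℂ] a))
        = S (idTensorH h (((1 : A) ⊗ₜ[ℂ] y) * Coalgebra.comul (R := ℂ) a)) := by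
      have := hstrong y a
      rw [← this, hSS]
    calc dualMul (fourier h c) (fourier h a) y
        = h (idTensorH h ((Coalgebra.comul (R := ℂ) y) * ((1 : A) ⊗ₜ[ℂ] a)) * c) := by
          simpa [dualMul] using stepA (Coalgebra.comul (R := ℂ) y)
      _ = h (S (idTensorH h (((1 : A) ⊗ₜ[ℂ] y) * Coalgebra.comul (R := ℂ) a)) * c) := by
          rw [hB]
      _ = h (y * hTensorId h ((TensorProduct.map S LinearMap.id (Coalgebra.comul (R := ℂ) a))
            * (c ⊗ₜ[ℂ] (1 : A)))) := stepC y (Coalgebra.comul (R := ℂ) a)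
      _ = fourier h (conv h c a) y := by
          simp [fourier, conv, hS]
  rw [key, hhh]
  congr 1
  have := stepE (Coalgebra.comul (R := ℂ) a)
  rw [Coalgebra.lTensor_counit_comul] at this
  simpa [conv, hS] using this
end QAG
end
end

section
/- Let B be a unital *-algebra over ℂ, α : A → A⊗B a linear map, and α̂ := (F⊗id_B)∘α∘F⁻¹ : A* → A*⊗B. Then α̂ is *-preserving (i.e. α̂(ω*) = (*⊗*)(α̂(ω)) for all ω ∈ A*, with the involution on A* given by ω*(a) := conj(ω(S(a)*))) if and only if α preserves the convolution adjoint, i.e. α(a^•) = (•⊗*)(α(a)) for all a ∈ A, where a^• := S(a*). -/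
/-!
The Fourier transform intertwines the convolution adjoint with the involution of `A*`:
`F(a^•)(x) = h(x S(a*)) = h(a* S(x)) = conj (h(S(x)* a)) = F(a)*(x)`, using that `h` is
hermitian and `S`-invariant and that `S` is an anti-multiplicative involution. Hence
`F ⊗ id` intertwines `• ⊗ *` with `* ⊗ *`, and since `F` is bijective (`h` is faithful and
`A` finite dimensional) `α̂ = (F ⊗ id) α F⁻¹` commutes with the involutions exactly when `α`
does. Both involutions on the tensor products are well-defined conjugate-linear maps, so
quantifying over all representations `∑ φᵢ ⊗ qᵢ` just says that they are applied.
-/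

open TensorProduct

noncomputable section

namespace QAG

variable {A : Type*} [Ring A] [HopfAlgebra ℂ A] [StarRing A] [StarModule ℂ A]
  [FiniteDimensional ℂ A]

/-- The Fourier transform `F : A → A*`, `F(a) = h(·a)`, as a linear map. -/
def fourierHom (h : A →ₗ[ℂ] ℂ) : A →ₗ[ℂ] Module.Dual ℂ A :=
  ((LinearMap.mul ℂ A).flip).compr₂ h

/-- The convolution product of `A` as a bilinear map. -/
def convBilin (h : A →ₗ[ℂ] ℂ) : A →ₗ[ℂ] A →ₗ[ℂ] A :=
  ((((LinearMap.mul ℂ (A ⊗[ℂ] A)).compl₁₂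
      ((TensorProduct.map (HopfAlgebra.antipode (R := ℂ)) LinearMap.id) ∘ₗ
        Coalgebra.comul (R := ℂ))
      ((TensorProduct.mk ℂ A A).flip (1 : A))).flip).compr₂ (hTensorId h))

/-- The product of the dual algebra `A*` as a bilinear map:
`(ω₁·ω₂)(c) = (ω₁ ⊗ ω₂)(Δ(c))`. -/
def dualMulBilin : Module.Dual ℂ A →ₗ[ℂ] Module.Dual ℂ A →ₗ[ℂ] Module.Dual ℂ A :=
  (TensorProduct.mapBilinear (σ₁₂ := RingHom.id ℂ) (M := A) (N := A) (M₂ := ℂ) (N₂ := ℂ)).compr₂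
    ((LinearMap.llcomp ℂ A (ℂ ⊗[ℂ] ℂ) ℂ (TensorProduct.lid ℂ ℂ).toLinearMap) ∘ₗ
      (LinearMap.lcomp ℂ (ℂ ⊗[ℂ] ℂ) (Coalgebra.comul (R := ℂ))))

section tensor
variable {B : Type*} [Ring B] [Algebra ℂ B]

/-- The product on `A ⊗ B` given by the convolution product `⋆` on the first tensor
factor and the multiplication of `B` on the second. -/
def convMulTensor (h : A →ₗ[ℂ] ℂ) :
    (A ⊗[ℂ] B) →ₗ[ℂ] (A ⊗[ℂ] B) →ₗ[ℂ] (A ⊗[ℂ] B) :=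
  TensorProduct.map₂ (convBilin h) (LinearMap.mul ℂ B)

/-- The product on `A* ⊗ B` given by the dual-algebra product on the first tensor
factor and the multiplication of `B` on the second. -/
def dualMulTensor :
    (Module.Dual ℂ A ⊗[ℂ] B) →ₗ[ℂ] (Module.Dual ℂ A ⊗[ℂ] B) →ₗ[ℂ] (Module.Dual ℂ A ⊗[ℂ] B) :=
  TensorProduct.map₂ dualMulBilin (LinearMap.mul ℂ B)

end tensor

/-- The convolution adjoint `a^• = S(a*)`. -/
def bullet (a : A) : A := HopfAlgebra.antipode (R := ℂ) (star a)

/-- The involution of the dual algebra `A*`: `ω*(a) = conj (ω (S(a)*))`. -/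
def dualStar (ω : Module.Dual ℂ A) : Module.Dual ℂ A where
  toFun a := starRingEnd ℂ (ω (star (HopfAlgebra.antipode (R := ℂ) a)))
  map_add' a b := by simp [star_add]
  map_smul' c a := by
    simp [map_smul, star_smul, mul_comm]

open HopfAlgebra

theorem apply_mul_antipode_comm {R C : Type*} [CommSemiring R] [Semiring C] [HopfAlgebra R C]
    (φ : C →ₗ[R] R) (hSS : ∀ c : C, antipode R (antipode R c) = c)
    (hSinv : ∀ c : C, φ (antipode R c) = φ c) (c x : C) :
    φ (c * antipode R x) = φ (x * antipode R c) := by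
  rw [← hSinv, antipode_mul_antidistrib, hSS]

theorem semiconj_iff_of_intertwining {X Y X' Y' : Type*} {e : X → X'} {E : Y → Y'}
    {α : X → Y} {α' : X' → Y'} {s : X → X} {t : Y → Y} {s' : X' → X'} {t' : Y' → Y'}
    (he : Function.Surjective e) (hE : Function.Injective E) (hα : ∀ x, α' (e x) = E (α x))
    (hs : Function.Semiconj e s s') (ht : Function.Semiconj E t t') :
    Function.Semiconj α' s' t' ↔ Function.Semiconj α s t := by
  constructor
  · intro H x
    apply hE
    rw [← hα, hs, H, hα, ht]
  · intro H x'
    obtain ⟨x, rfl⟩ := he x'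
    rw [← hs, hα, H, ht, hα]

theorem forall_eq_sum_tmul_imp_iff_eq_map {R R₂ M N M₂ N₂ : Type*}
    [CommSemiring R] [CommSemiring R₂] {σ : R →+* R₂} [AddCommMonoid M] [AddCommMonoid N]
    [AddCommMonoid M₂] [AddCommMonoid N₂] [Module R M] [Module R N] [Module R₂ M₂]
    [Module R₂ N₂] (f : M →ₛₗ[σ] M₂) (g : N →ₛₗ[σ] N₂) (x : M ⊗[R] N) (y : M₂ ⊗[R₂] N₂) :
    (∀ (n : ℕ) (m : Fin n → M) (q : Fin n → N),
        x = ∑ i, m i ⊗ₜ[R] q i → y = ∑ i, f (m i) ⊗ₜ[R₂] g (q i)) ↔ y = map f g x := by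
  constructor
  · intro H
    obtain ⟨n, m, q, hx⟩ := exists_sum_tmul_eq x
    rw [H n m q hx, hx, map_sum]
    simp only [map_tmul]
  · rintro rfl n m q rfl
    simp only [map_sum, map_tmul]

section

variable {A : Type*} [Ring A] [HopfAlgebra ℂ A] {h : A →ₗ[ℂ] ℂ}

theorem fourierHom_bijective [StarRing A] [FiniteDimensional ℂ A]
    (hfaithful : ∀ a : A, h (star a * a) = 0 → a = 0) : Function.Bijective (fourierHom h) := by
  have hinj : Function.Injective (fourierHom h) := by
    rw [injective_iff_map_eq_zero]
    intro a ha
    exact hfaithful a congr($ha (star a))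
  exact ⟨hinj, (LinearMap.injective_iff_surjective_of_finrank_eq_finrank
    Subspace.dual_finrank_eq.symm).mp hinj⟩

variable [StarRing A] [StarModule ℂ A]

def bulletₛₗ : A →ₗ⋆[ℂ] A := antipode ℂ ∘ₛₗ (starLinearEquiv ℂ).toLinearMap

@[simp] theorem bulletₛₗ_apply (a : A) : bulletₛₗ a = bullet a := rfl

def dualStarₛₗ : Module.Dual ℂ A →ₗ⋆[ℂ] Module.Dual ℂ A where
  toFun := dualStar
  map_add' ω η := by ext; simp [dualStar]
  map_smul' c ω := by ext; simp [dualStar]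

@[simp] theorem dualStarₛₗ_apply (ω : Module.Dual ℂ A) : dualStarₛₗ ω = dualStar ω := rfl

theorem fourierHom_bullet (hSS : ∀ a : A, antipode ℂ (antipode ℂ a) = a)
    (hSinv : ∀ a : A, h (antipode ℂ a) = h a)
    (hhermitian : ∀ a : A, h (star a) = starRingEnd ℂ (h a)) (a : A) :
    fourierHom h (bullet a) = dualStar (fourierHom h a) := by
  ext x
  calc h (x * antipode ℂ (star a)) = h (star a * antipode ℂ x) :=
        apply_mul_antipode_comm h hSS hSinv _ _
    _ = starRingEnd ℂ (h (star (antipode ℂ x) * a)) := by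
        rw [← hhermitian, star_mul, star_star]

theorem semiconj_map_fourierHom {B : Type*} [AddCommGroup B] [Module ℂ B] [StarAddMonoid B]
    [StarModule ℂ B] (hSS : ∀ a : A, antipode ℂ (antipode ℂ a) = a)
    (hSinv : ∀ a : A, h (antipode ℂ a) = h a)
    (hhermitian : ∀ a : A, h (star a) = starRingEnd ℂ (h a)) :
    Function.Semiconj (map (fourierHom h) (LinearMap.id : B →ₗ[ℂ] B))
      (map bulletₛₗ (starLinearEquiv ℂ).toLinearMap)
      (map dualStarₛₗ (starLinearEquiv ℂ).toLinearMap) := by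
  intro x
  induction x using TensorProduct.induction_on with
  | zero => simp only [map_zero]
  | tmul a b =>
    simp only [map_tmul, bulletₛₗ_apply, dualStarₛₗ_apply, LinearMap.id_apply,
      LinearEquiv.coe_coe, starLinearEquiv_apply]
    exact congr($(fourierHom_bullet hSS hSinv hhermitian a) ⊗ₜ star b)
  | add x y hx hy => simp only [map_add, hx, hy]

end

theorem dual_map_star_preserving_iff_convolution_adjoint_preserved_general
    (h : A →ₗ[ℂ] ℂ)
    -- the antipode is an involution commuting with the `*`-operation
    (hSS : ∀ a : A, HopfAlgebra.antipode (R := ℂ) (HopfAlgebra.antipode (R := ℂ) a) = a)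
    -- `h` is faithful, hermitian, tracial, `S`-invariant and (bi-)invariant
    (hfaithful : ∀ a : A, h (star a * a) = 0 → a = 0)
    (hhermitian : ∀ a : A, h (star a) = starRingEnd ℂ (h a))
    (hSinv : ∀ a : A, h (HopfAlgebra.antipode (R := ℂ) a) = h a)
    {B : Type*} [Ring B] [Algebra ℂ B] [StarRing B] [StarModule ℂ B]
    (α : A →ₗ[ℂ] A ⊗[ℂ] B)
    (αhat : Module.Dual ℂ A →ₗ[ℂ] Module.Dual ℂ A ⊗[ℂ] B)
    -- `α̂ = (F ⊗ id) ∘ α ∘ F⁻¹`, i.e. `α̂ ∘ F = (F ⊗ id) ∘ α`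
    (hαhat : ∀ a : A,
      αhat (fourierHom h a)
        = TensorProduct.map (fourierHom h) LinearMap.id (α a)) :
    (∀ (ω : Module.Dual ℂ A) (n : ℕ) (φ : Fin n → Module.Dual ℂ A) (q : Fin n → B),
        αhat ω = ∑ i, φ i ⊗ₜ[ℂ] q i →
          αhat (dualStar ω) = ∑ i, dualStar (φ i) ⊗ₜ[ℂ] star (q i))
      ↔ (∀ (a : A) (n : ℕ) (u : Fin n → A) (q : Fin n → B),
          α a = ∑ i, u i ⊗ₜ[ℂ] q i →
            α (bullet a) = ∑ i, bullet (u i) ⊗ₜ[ℂ] star (q i)) := by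
  have hF := fourierHom_bijective hfaithful
  calc _ ↔ Function.Semiconj αhat dualStarₛₗ (map dualStarₛₗ (starLinearEquiv ℂ).toLinearMap) :=
        forall_congr' fun ω => forall_eq_sum_tmul_imp_iff_eq_map dualStarₛₗ
          (starLinearEquiv ℂ).toLinearMap (αhat ω) (αhat (dualStar ω))
    _ ↔ Function.Semiconj α bulletₛₗ (map bulletₛₗ (starLinearEquiv ℂ).toLinearMap) :=
        semiconj_iff_of_intertwining hF.surjective
          (Module.Flat.rTensor_preserves_injective_linearMap _ hF.injective) hαhat
          (fourierHom_bullet hSS hSinv hhermitian)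
          (semiconj_map_fourierHom hSS hSinv hhermitian)
    _ ↔ _ := (forall_congr' fun a => forall_eq_sum_tmul_imp_iff_eq_map bulletₛₗ
          (starLinearEquiv ℂ).toLinearMap (α a) (α (bullet a))).symm

/-- `α̂ = (F ⊗ id) ∘ α ∘ F⁻¹` is `*`-preserving (for the involution
`ω*(a) = conj (ω (S(a)*))` on `A*` and the involution `* ⊗ *` on `A* ⊗ B`) iff `α`
preserves the convolution adjoint `a^• = S(a*)` (i.e. `α ∘ • = (• ⊗ *) ∘ α`).
The (antilinear, hence not expressible by `TensorProduct.map`) maps `* ⊗ *` and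
`• ⊗ *` on the tensor products are expressed through arbitrary finite
representations by simple tensors. -/
theorem dual_map_star_preserving_iff_convolution_adjoint_preserved
    (h : A →ₗ[ℂ] ℂ)
    -- the antipode is an involution commuting with the `*`-operation
    (hSS : ∀ a : A, HopfAlgebra.antipode (R := ℂ) (HopfAlgebra.antipode (R := ℂ) a) = a)
    (hSstar : ∀ a : A, HopfAlgebra.antipode (R := ℂ) (star a)
      = star (HopfAlgebra.antipode (R := ℂ) a))
    -- `h` is faithful, hermitian, tracial, `S`-invariant and (bi-)invariant
    (hfaithful : ∀ a : A, h (star a * a) = 0 → a = 0)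
    (hhermitian : ∀ a : A, h (star a) = starRingEnd ℂ (h a))
    (htracial : ∀ a b : A, h (a * b) = h (b * a))
    (hSinv : ∀ a : A, h (HopfAlgebra.antipode (R := ℂ) a) = h a)
    (hinvl : ∀ a : A, hTensorId h (Coalgebra.comul (R := ℂ) a) = h a • (1 : A))
    (hinvr : ∀ a : A, idTensorH h (Coalgebra.comul (R := ℂ) a) = h a • (1 : A))
    -- strong invariance
    (hstrong : ∀ b c : A,
      HopfAlgebra.antipode (R := ℂ)
          (idTensorH h ((Coalgebra.comul (R := ℂ) b) * ((1 : A) ⊗ₜ[ℂ] c)))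
        = idTensorH h (((1 : A) ⊗ₜ[ℂ] b) * Coalgebra.comul (R := ℂ) c))
    {B : Type*} [Ring B] [Algebra ℂ B] [StarRing B] [StarModule ℂ B]
    (α : A →ₗ[ℂ] A ⊗[ℂ] B)
    (αhat : Module.Dual ℂ A →ₗ[ℂ] Module.Dual ℂ A ⊗[ℂ] B)
    -- `α̂ = (F ⊗ id) ∘ α ∘ F⁻¹`, i.e. `α̂ ∘ F = (F ⊗ id) ∘ α`
    (hαhat : ∀ a : A,
      αhat (fourierHom h a)
        = TensorProduct.map (fourierHom h) LinearMap.id (α a)) :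
    (∀ (ω : Module.Dual ℂ A) (n : ℕ) (φ : Fin n → Module.Dual ℂ A) (q : Fin n → B),
        αhat ω = ∑ i, φ i ⊗ₜ[ℂ] q i →
          αhat (dualStar ω) = ∑ i, dualStar (φ i) ⊗ₜ[ℂ] star (q i))
      ↔ (∀ (a : A) (n : ℕ) (u : Fin n → A) (q : Fin n → B),
          α a = ∑ i, u i ⊗ₜ[ℂ] q i →
            α (bullet a) = ∑ i, bullet (u i) ⊗ₜ[ℂ] star (q i)) :=
  dual_map_star_preserving_iff_convolution_adjoint_preserved_general h hSS hfaithful hhermitian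
    hSinv α αhat hαhat
end QAG
end
end

section
/- Let B be a unital ℂ-algebra and α : A → A⊗B a unital algebra homomorphism such that α(η) = η⊗1_B. Then α preserves the counit: (ε⊗id_B)(α(a)) = ε(a)·1_B for all a ∈ A. -/
open TensorProduct

noncomputable section

namespace QAG

variable {A : Type*} [Ring A] [HopfAlgebra ℂ A] [StarRing A] [StarModule ℂ A]
  [FiniteDimensional ℂ A]

/-- a unital algebra homomorphism `α : A → A ⊗ B` with
`α(η) = η ⊗ 1` preserves the counit: `(ε ⊗ id)(α(a)) = ε(a)·1`. -/
theorem haar_element_preserving_hom_preserves_counit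
    -- the antipode is an involution commuting with the `*`-operation
    (hSS : ∀ a : A, HopfAlgebra.antipode (R := ℂ) (HopfAlgebra.antipode (R := ℂ) a) = a)
    (hSstar : ∀ a : A, HopfAlgebra.antipode (R := ℂ) (star a)
      = star (HopfAlgebra.antipode (R := ℂ) a))
    -- the Haar element `η`
    (η : A) (hη₁ : Coalgebra.counit (R := ℂ) η = 1)
    (hη₂ : ∀ a : A, a * η = Coalgebra.counit (R := ℂ) a • η)
    {B : Type*} [Ring B] [Algebra ℂ B]
    (α : A →ₐ[ℂ] A ⊗[ℂ] B)
    (hαη : α η = η ⊗ₜ[ℂ] (1 : B)) :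
    ∀ a : A,
      (TensorProduct.lid ℂ B) (TensorProduct.map (Coalgebra.counit (R := ℂ)) LinearMap.id (α a))
        = Coalgebra.counit (R := ℂ) a • (1 : B) := by
  intro a
  set f : A →ₐ[ℂ] B :=
    ((Algebra.TensorProduct.lid ℂ B).toAlgHom.comp
      ((Algebra.TensorProduct.map (Bialgebra.counitAlgHom ℂ A) (AlgHom.id ℂ B)).comp α)) with hf
  have hlin : ∀ x : A ⊗[ℂ] B,
      (TensorProduct.lid ℂ B) (TensorProduct.map (Coalgebra.counit (R := ℂ)) LinearMap.id x)
        = (Algebra.TensorProduct.lid ℂ B)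
            (Algebra.TensorProduct.map (Bialgebra.counitAlgHom ℂ A) (AlgHom.id ℂ B) x) := by
    intro x
    induction x using TensorProduct.induction_on with
    | zero => simp
    | tmul a b => simp [Algebra.TensorProduct.lid, Bialgebra.counitAlgHom]
    | add x y hx hy => simp [map_add, hx, hy]
  rw [hlin]
  change f a = _
  have hfη : f η = 1 := by
    simp [hf, hαη, Bialgebra.counitAlgHom, hη₁]
  calc f a = f a * f η := by rw [hfη, mul_one]
    _ = f (a * η) := (map_mul f a η).symm
    _ = Coalgebra.counit (R := ℂ) a • f η := by rw [hη₂, map_smul]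
    _ = _ := by rw [hfη]
end QAG
end
end

section
/- Let ψ : A → A be a bijective linear map which satisfies h∘ψ = h, commutes with the antipode (ψ∘S = S∘ψ), and is multiplicative for the convolution product (ψ(a⋆b) = ψ(a)⋆ψ(b) for all a,b ∈ A). Then ψ preserves the comultiplication: Δ∘ψ = (ψ⊗ψ)∘Δ, i.e. (ψ⁻¹⊗ψ⁻¹)∘Δ∘ψ = Δ. -/
/-!
The Fourier transform `F a = h (· * a)` is a linear bijection `A → A*` (by faithfulness of `h`),
and strong invariance makes it multiplicative: `F (u ⋆ v) = F u · F v` for the product of `A*`.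
Hence `Δ` is recovered from `⋆` and `h` through `(F u ⊗ F v) (Δ c) = h (c * (u ⋆ v))`, and it
suffices to show that `ψ` is unitary for the pairing `h (x * y)`. As `ε (u ⋆ b) = h (S b * u)` and
`S² = id`, this amounts to `ε ∘ ψ = ε`. The counit is intrinsic to the convolution algebra: the
trace of left `⋆`-multiplication by `a` is `ε a * h 1`, and `ψ` conjugates these operators.
-/

open TensorProduct

noncomputable section

namespace LinearMap

theorem trace_eq_sum_of_sum_smul_eq {R M ι : Type*} [CommRing R] [AddCommGroup M] [Module R M]
    [Module.Free R M] [Module.Finite R M] (s : Finset ι) (f : ι → Module.Dual R M) (v : ι → M)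
    (hv : ∀ x, ∑ i ∈ s, f i x • v i = x) (T : M →ₗ[R] M) :
    trace R M T = ∑ i ∈ s, f i (T (v i)) := by
  have hT : ∑ i ∈ s, dualTensorHom R M M (f i ⊗ₜ T (v i)) = T := by
    ext x
    conv_rhs => rw [← hv x]
    simp [map_sum]
  conv_lhs => rw [← hT, map_sum]
  simp only [trace_eq_contract_apply, contractLeft_apply]

end LinearMap

namespace TensorProduct

theorem ext_of_forall_lid_map_eq {R M N : Type*} [CommRing R] [AddCommGroup M] [Module R M]
    [AddCommGroup N] [Module R N] [Module.Free R M] [Module.Finite R M] [Module.Free R N]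
    [Module.Finite R N] {t t' : M ⊗[R] N}
    (H : ∀ (f : Module.Dual R M) (g : Module.Dual R N),
      TensorProduct.lid R R (map f g t) = TensorProduct.lid R R (map f g t')) :
    t = t' := by
  rw [← sub_eq_zero, ← Module.forall_dual_apply_eq_zero_iff R]
  intro φ
  obtain ⟨x, rfl⟩ := (dualDistribEquiv R M N).surjective φ
  induction x using TensorProduct.induction_on with
  | zero => simp
  | tmul f g =>
    change TensorProduct.lid R R (map f g (t - t')) = 0
    rw [map_sub, map_sub, H, sub_self]
  | add x y hx hy => rw [map_add, LinearMap.add_apply, hx, hy, add_zero]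

end TensorProduct

namespace Coalgebra

theorem sum_apply_mul_counit {R A ι : Type*} [CommSemiring R] [AddCommMonoid A] [Module R A]
    [Coalgebra R A] (f : Module.Dual R A) {a : A} (ra : Repr R a ι) :
    ∑ i ∈ ra.index, f (ra.left i) * counit (R := R) (ra.right i) = f a := by
  have := congr(TensorProduct.lid R R $(sum_map_tmul_counit_eq f a (repr := ra)))
  simpa only [map_sum, TensorProduct.lid_tmul, smul_eq_mul, mul_one] using this

theorem sum_counit_smul_left {R A ι : Type*} [CommSemiring R] [AddCommMonoid A] [Module R A]
    [Coalgebra R A] {a : A} (ra : Repr R a ι) :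
    ∑ i ∈ ra.index, counit (R := R) (ra.right i) • ra.left i = a := by
  simpa only [map_sum, _root_.TensorProduct.rid_tmul, one_smul]
    using congrArg (_root_.TensorProduct.rid R A) (sum_tmul_counit_eq ra)

end Coalgebra

namespace QAG

open Coalgebra HopfAlgebra

section Convolution

variable {A : Type*} [Ring A] [HopfAlgebra ℂ A] (h : A →ₗ[ℂ] ℂ)

def IsStronglyInvariant : Prop :=
  ∀ b c : A, antipode ℂ (idTensorH h (comul b * ((1 : A) ⊗ₜ[ℂ] c)))
    = idTensorH h (((1 : A) ⊗ₜ[ℂ] b) * comul c)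

theorem fourier_apply (a x : A) : fourier h a x = h (x * a) := rfl

def fourierLinearMap : A →ₗ[ℂ] Module.Dual ℂ A :=
  LinearMap.llcomp ℂ A A ℂ h ∘ₗ (LinearMap.mul ℂ A).flip

def convLeft (a : A) : A →ₗ[ℂ] A :=
  hTensorId h ∘ₗ LinearMap.mulRight ℂ (a ⊗ₜ[ℂ] (1 : A)) ∘ₗ
    TensorProduct.map (antipode ℂ) LinearMap.id ∘ₗ comul

theorem convLeft_apply (a x : A) : convLeft h a x = conv h a x := rfl

theorem conv_eq_sum {ι : Type*} (u : A) {v : A} (rv : Repr ℂ v ι) :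
    conv h u v = ∑ i ∈ rv.index, h (antipode ℂ (rv.left i) * u) • rv.right i := by
  simp [conv, hTensorId, ← rv.eq, map_sum, Finset.sum_mul, Algebra.TensorProduct.tmul_mul_tmul]

theorem dualMul_eq_sum {ι : Type*} (φ ω : Module.Dual ℂ A) {c : A} (rc : Repr ℂ c ι) :
    dualMul φ ω c = ∑ i ∈ rc.index, φ (rc.left i) * ω (rc.right i) := by
  simp [dualMul, ← rc.eq, map_sum]

theorem dualMul_counit (φ : Module.Dual ℂ A) : dualMul φ (counit (R := ℂ)) = φ := by
  ext c
  rw [dualMul_eq_sum φ _ (ℛ ℂ c), sum_apply_mul_counit]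

theorem counit_conv (u b : A) : counit (R := ℂ) (conv h u b) = h (antipode ℂ b * u) := by
  rw [conv_eq_sum h u (ℛ ℂ b), map_sum]
  simp only [map_smul, smul_eq_mul]
  exact sum_apply_mul_counit (fourier h u ∘ₗ antipode ℂ) (ℛ ℂ b)

theorem sum_smul_antipode_eq_sum_smul (hstrong : IsStronglyInvariant h) {ι κ : Type*}
    {v c : A} (rv : Repr ℂ v ι) (rc : Repr ℂ c κ) :
    ∑ i ∈ rv.index, h (rv.right i * c) • antipode ℂ (rv.left i)
      = ∑ j ∈ rc.index, h (v * rc.right j) • rc.left j := by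
  have := hstrong v c
  simpa [idTensorH, ← rv.eq, ← rc.eq, map_sum, Finset.sum_mul, Finset.mul_sum,
    Algebra.TensorProduct.tmul_mul_tmul] using this

theorem fourier_conv (htracial : ∀ a b : A, h (a * b) = h (b * a))
    (hstrong : IsStronglyInvariant h) (u v : A) :
    fourier h (conv h u v) = dualMul (fourier h u) (fourier h v) := by
  ext c
  have key := congr(h ($(sum_smul_antipode_eq_sum_smul h hstrong (ℛ ℂ v) (ℛ ℂ c)) * u))
  simp only [Finset.sum_mul, smul_mul_assoc, map_sum, map_smul, smul_eq_mul] at key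
  rw [fourier_apply, htracial, conv_eq_sum h u (ℛ ℂ v), dualMul_eq_sum _ _ (ℛ ℂ c)]
  simp only [Finset.sum_mul, smul_mul_assoc, map_sum, map_smul, smul_eq_mul, fourier_apply]
  refine (Finset.sum_congr rfl fun _ _ => mul_comm _ _).trans (key.trans ?_)
  exact Finset.sum_congr rfl fun _ _ => by rw [mul_comm, htracial v]

theorem convLeft_map {ψ : A →ₗ[ℂ] A} (hbij : Function.Bijective ψ)
    (hψconv : ∀ a b : A, ψ (conv h a b) = conv h (ψ a) (ψ b)) (z : A) :
    convLeft h (ψ z) = (LinearEquiv.ofBijective ψ hbij).conj (convLeft h z) := by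
  ext x
  obtain ⟨y, rfl⟩ := hbij.2 x
  simp [LinearEquiv.conj_apply, convLeft_apply, hψconv]

end Convolution

section Faithful

variable {A : Type*} [Ring A] [HopfAlgebra ℂ A] [StarRing A] (h : A →ₗ[ℂ] ℂ)
  (hfaithful : ∀ a : A, h (star a * a) = 0 → a = 0)

include hfaithful

theorem h_one_ne_zero [Nontrivial A] : h 1 ≠ 0 := fun h1 =>
  one_ne_zero (hfaithful 1 (by rwa [star_one, one_mul]))

theorem fourier_injective : Function.Injective (fourier h) := by
  refine (injective_iff_map_eq_zero (fourierLinearMap h)).mpr fun a ha => hfaithful a ?_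
  exact LinearMap.congr_fun ha (star a)

theorem fourier_surjective [FiniteDimensional ℂ A] : Function.Surjective (fourier h) :=
  (LinearMap.injective_iff_surjective_of_finrank_eq_finrank (f := fourierLinearMap h)
    Subspace.dual_finrank_eq.symm).mp (fourier_injective h hfaithful)

theorem conv_eq_self_of_fourier_eq_counit (htracial : ∀ a b : A, h (a * b) = h (b * a))
    (hstrong : IsStronglyInvariant h) {e : A} (he : fourier h e = counit) (a : A) :
    conv h a e = a :=
  fourier_injective h hfaithful (by rw [fourier_conv h htracial hstrong, he, dualMul_counit])

end Faithful

section ConvolutionUnit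

variable {A : Type*} [Ring A] [HopfAlgebra ℂ A] (h : A →ₗ[ℂ] ℂ)
  (hSS : ∀ a : A, antipode ℂ (antipode ℂ a) = a)
  (htracial : ∀ a b : A, h (a * b) = h (b * a)) (hstrong : IsStronglyInvariant h)
  {e : A} (he : fourier h e = counit)

include hSS htracial hstrong he

theorem sum_fourier_antipode_smul_eq_self {ι : Type*} (re : Repr ℂ e ι) (x : A) :
    ∑ i ∈ re.index, fourier h (re.right i) (antipode ℂ x) • re.left i = x := by
  have hstrong_e := sum_smul_antipode_eq_sum_smul h hstrong re (ℛ ℂ (antipode ℂ x))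
  have hcounit : ∀ y, h (e * y) = counit (R := ℂ) y := fun y => by
    rw [htracial, ← fourier_apply, he]
  simp only [hcounit, sum_counit_smul_left] at hstrong_e
  have := congrArg (antipode ℂ) hstrong_e
  simp only [map_sum, map_smul, hSS] at this
  simpa only [fourier_apply, htracial (antipode ℂ x)] using this

theorem trace_convLeft_eq_of_fourier_eq_counit [FiniteDimensional ℂ A] (a : A) :
    LinearMap.trace ℂ A (convLeft h a) = h (antipode ℂ e * a) * h 1 := by
  let re := ℛ ℂ e
  rw [LinearMap.trace_eq_sum_of_sum_smul_eq re.index (fun i => fourier h (re.right i) ∘ₗ antipode ℂ)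
    re.left (sum_fourier_antipode_smul_eq_self h hSS htracial hstrong he re)]
  let Φ : A ⊗[ℂ] (A ⊗[ℂ] A) →ₗ[ℂ] ℂ := TensorProduct.lid ℂ ℂ ∘ₗ
    TensorProduct.map (fourier h a ∘ₗ antipode ℂ)
      (h ∘ₗ LinearMap.mul' ℂ A ∘ₗ (antipode ℂ).rTensor A)
  have hΦ : ∀ x y z : A, Φ (x ⊗ₜ (y ⊗ₜ z)) = h (antipode ℂ x * a) * h (antipode ℂ y * z) :=
    fun _ _ _ => rfl
  -- coassociativity turns `(Δ ⊗ id) (Δ e)` into `(id ⊗ Δ) (Δ e)`, where the antipode axiom applies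
  have hcoassoc := congrArg Φ
    (sum_tmul_tmul_eq re (fun i => ℛ ℂ (re.left i)) (fun i => ℛ ℂ (re.right i)))
  simp only [map_sum, hΦ] at hcoassoc
  calc ∑ i ∈ re.index, (fourier h (re.right i) ∘ₗ antipode ℂ) (convLeft h a (re.left i))
      = ∑ i ∈ re.index, ∑ j ∈ (ℛ ℂ (re.left i)).index,
          h (antipode ℂ ((ℛ ℂ (re.left i)).left j) * a)
            * h (antipode ℂ ((ℛ ℂ (re.left i)).right j) * re.right i) := by
        refine Finset.sum_congr rfl fun i _ => ?_
        simp only [LinearMap.comp_apply, convLeft_apply, conv_eq_sum h a (ℛ ℂ (re.left i)),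
          map_sum, map_smul, fourier_apply, smul_eq_mul]
    _ = ∑ i ∈ re.index, h (antipode ℂ (re.left i) * a) * ∑ j ∈ (ℛ ℂ (re.right i)).index,
          h (antipode ℂ ((ℛ ℂ (re.right i)).left j) * (ℛ ℂ (re.right i)).right j) := by
        simp only [hcoassoc, Finset.mul_sum]
    _ = ∑ i ∈ re.index, h (antipode ℂ (re.left i) * a) * counit (R := ℂ) (re.right i) * h 1 := by
        refine Finset.sum_congr rfl fun i _ => ?_
        rw [← map_sum, sum_antipode_mul_eq_smul, map_smul, smul_eq_mul, mul_assoc]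
    _ = h (antipode ℂ e * a) * h 1 := by
        rw [← Finset.sum_mul]
        exact congrArg (· * h 1) (sum_apply_mul_counit (fourier h a ∘ₗ antipode ℂ) re)

end ConvolutionUnit

section Automorphism

variable {A : Type*} [Ring A] [HopfAlgebra ℂ A] [StarRing A] [FiniteDimensional ℂ A]
  (h : A →ₗ[ℂ] ℂ) (hSS : ∀ a : A, antipode ℂ (antipode ℂ a) = a)
  (hfaithful : ∀ a : A, h (star a * a) = 0 → a = 0)
  (htracial : ∀ a b : A, h (a * b) = h (b * a)) (hstrong : IsStronglyInvariant h)
  (ψ : A →ₗ[ℂ] A) (hbij : Function.Bijective ψ)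
  (hψconv : ∀ a b : A, ψ (conv h a b) = conv h (ψ a) (ψ b))

include hSS hfaithful htracial hstrong

theorem trace_convLeft (a : A) :
    LinearMap.trace ℂ A (convLeft h a) = counit (R := ℂ) a * h 1 := by
  obtain ⟨e, he⟩ := fourier_surjective h hfaithful counit
  rw [trace_convLeft_eq_of_fourier_eq_counit h hSS htracial hstrong he, ← counit_conv,
    conv_eq_self_of_fourier_eq_counit h hfaithful htracial hstrong he]

include hbij hψconv

theorem counit_map (z : A) : counit (R := ℂ) (ψ z) = counit (R := ℂ) z := by
  cases subsingleton_or_nontrivial A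
  · rw [Subsingleton.elim z 0, map_zero]
  have := LinearMap.trace_conj' (convLeft h z) (LinearEquiv.ofBijective ψ hbij)
  rw [← convLeft_map h hbij hψconv, trace_convLeft h hSS hfaithful htracial hstrong,
    trace_convLeft h hSS hfaithful htracial hstrong] at this
  exact mul_right_cancel₀ (h_one_ne_zero h hfaithful) this

theorem h_map_mul_map (hψS : ∀ a : A, ψ (antipode ℂ a) = antipode ℂ (ψ a)) (x y : A) :
    h (ψ x * ψ y) = h (x * y) := by
  calc h (ψ x * ψ y) = h (antipode ℂ (ψ (antipode ℂ x)) * ψ y) := by rw [hψS, hSS]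
    _ = counit (R := ℂ) (ψ (conv h y (antipode ℂ x))) := by rw [hψconv, counit_conv]
    _ = counit (R := ℂ) (conv h y (antipode ℂ x)) :=
        counit_map h hSS hfaithful htracial hstrong ψ hbij hψconv _
    _ = h (x * y) := by rw [counit_conv, hSS]

theorem fourier_map_comp (hψS : ∀ a : A, ψ (antipode ℂ a) = antipode ℂ (ψ a)) (p : A) :
    fourier h (ψ p) ∘ₗ ψ = fourier h p :=
  LinearMap.ext fun x => h_map_mul_map h hSS hfaithful htracial hstrong ψ hbij hψconv hψS x p

end Automorphism

variable {A : Type*} [Ring A] [HopfAlgebra ℂ A] [StarRing A] [StarModule ℂ A]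
  [FiniteDimensional ℂ A]

theorem convolution_multiplicative_implies_comul_preserving_general
    (h : A →ₗ[ℂ] ℂ)
    -- the antipode is an involution commuting with the `*`-operation
    (hSS : ∀ a : A, HopfAlgebra.antipode (R := ℂ) (HopfAlgebra.antipode (R := ℂ) a) = a)
    -- `h` is faithful, hermitian, tracial, `S`-invariant and (bi-)invariant
    (hfaithful : ∀ a : A, h (star a * a) = 0 → a = 0)
    (htracial : ∀ a b : A, h (a * b) = h (b * a))
    -- strong invariance
    (hstrong : ∀ b c : A,
      HopfAlgebra.antipode (R := ℂ)
          (idTensorH h ((Coalgebra.comul (R := ℂ) b) * ((1 : A) ⊗ₜ[ℂ] c)))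
        = idTensorH h (((1 : A) ⊗ₜ[ℂ] b) * Coalgebra.comul (R := ℂ) c))
    (ψ : A →ₗ[ℂ] A) (hbij : Function.Bijective ψ)
    (hψS : ∀ a : A, ψ (HopfAlgebra.antipode (R := ℂ) a)
      = HopfAlgebra.antipode (R := ℂ) (ψ a))
    (hψconv : ∀ a b : A, ψ (conv h a b) = conv h (ψ a) (ψ b)) :
    ∀ a : A,
      Coalgebra.comul (R := ℂ) (ψ a) = TensorProduct.map ψ ψ (Coalgebra.comul (R := ℂ) a) := by
  intro a
  have hunitary := fourier_map_comp h hSS hfaithful htracial hstrong ψ hbij hψconv hψS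
  refine TensorProduct.ext_of_forall_lid_map_eq fun f g => ?_
  obtain ⟨p, rfl⟩ := ((fourier_surjective h hfaithful).comp hbij.2) f
  obtain ⟨q, rfl⟩ := ((fourier_surjective h hfaithful).comp hbij.2) g
  calc TensorProduct.lid ℂ ℂ
        (TensorProduct.map (fourier h (ψ p)) (fourier h (ψ q)) (Coalgebra.comul (ψ a)))
      = fourier h (conv h (ψ p) (ψ q)) (ψ a) := by rw [fourier_conv h htracial hstrong]; rfl
    _ = fourier h (conv h p q) a := by rw [← hψconv, ← LinearMap.comp_apply, hunitary]
    _ = TensorProduct.lid ℂ ℂ (TensorProduct.map (fourier h (ψ p) ∘ₗ ψ) (fourier h (ψ q) ∘ₗ ψ)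
          (Coalgebra.comul a)) := by rw [hunitary, hunitary, fourier_conv h htracial hstrong]; rfl
    _ = _ := by rw [TensorProduct.map_comp]; rfl

/-- a bijective linear map `ψ : A → A` preserving `h`, commuting
with the antipode and multiplicative for the convolution product preserves the
comultiplication: `Δ ∘ ψ = (ψ ⊗ ψ) ∘ Δ`. -/
theorem convolution_multiplicative_implies_comul_preserving
    (h : A →ₗ[ℂ] ℂ)
    -- the antipode is an involution commuting with the `*`-operation
    (hSS : ∀ a : A, HopfAlgebra.antipode (R := ℂ) (HopfAlgebra.antipode (R := ℂ) a) = a)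
    (hSstar : ∀ a : A, HopfAlgebra.antipode (R := ℂ) (star a)
      = star (HopfAlgebra.antipode (R := ℂ) a))
    -- `h` is faithful, hermitian, tracial, `S`-invariant and (bi-)invariant
    (hfaithful : ∀ a : A, h (star a * a) = 0 → a = 0)
    (hhermitian : ∀ a : A, h (star a) = starRingEnd ℂ (h a))
    (htracial : ∀ a b : A, h (a * b) = h (b * a))
    (hSinv : ∀ a : A, h (HopfAlgebra.antipode (R := ℂ) a) = h a)
    (hinvl : ∀ a : A, hTensorId h (Coalgebra.comul (R := ℂ) a) = h a • (1 : A))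
    (hinvr : ∀ a : A, idTensorH h (Coalgebra.comul (R := ℂ) a) = h a • (1 : A))
    -- strong invariance
    (hstrong : ∀ b c : A,
      HopfAlgebra.antipode (R := ℂ)
          (idTensorH h ((Coalgebra.comul (R := ℂ) b) * ((1 : A) ⊗ₜ[ℂ] c)))
        = idTensorH h (((1 : A) ⊗ₜ[ℂ] b) * Coalgebra.comul (R := ℂ) c))
    (ψ : A →ₗ[ℂ] A) (hbij : Function.Bijective ψ)
    (hψh : ∀ a : A, h (ψ a) = h a)
    (hψS : ∀ a : A, ψ (HopfAlgebra.antipode (R := ℂ) a)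
      = HopfAlgebra.antipode (R := ℂ) (ψ a))
    (hψconv : ∀ a b : A, ψ (conv h a b) = conv h (ψ a) (ψ b)) :
    ∀ a : A,
      Coalgebra.comul (R := ℂ) (ψ a) = TensorProduct.map ψ ψ (Coalgebra.comul (R := ℂ) a) :=
  convolution_multiplicative_implies_comul_preserving_general h hSS hfaithful htracial hstrong ψ
    hbij hψS hψconv
end QAG
end
end

section
/- Let B be a unital C*-algebra, n ∈ ℕ, and let (p_{j,i})_{j,i=1}^n be elements of B such that each p_{j,i} is a self-adjoint idempotent (p_{j,i}* = p_{j,i} = p_{j,i}²), p_{j,i}·p_{j,k} = 0 whenever i ≠ k, and Σ_{i=1}^n p_{j,i} = 1_B for every j. Suppose there exist real numbers c₁,…,cₙ > 0 with Σ_{i=1}^n c_i = 1 such that Σ_{j=1}^n c_j·p_{j,i} = c_i·1_B for every i. Then Σ_{j=1}^n p_{j,i} = 1_B for every i; consequently (p_{j,i}) is a magic unitary (a matrix of projections each of whose rows and columns sums to 1). -/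
noncomputable section

private lemma magic_aux {B : Type*} [CStarAlgebra B] {n : ℕ}
    (p : Fin n → Fin n → B) (c : Fin n → ℝ)
    (hsa : ∀ j i, star (p j i) = p j i)
    (hidem : ∀ j i, p j i * p j i = p j i)
    (hpos : ∀ i, 0 < c i) :
    ∀ (N : ℕ) (T : Finset (Fin n)), T.card ≤ N →
      (∀ j ∈ T, ∑ i ∈ T, p j i = 1) →
      (∀ i ∈ T, ∑ j ∈ T, (c j : ℂ) • p j i = (c i : ℂ) • (1 : B)) →
      ∀ i ∈ T, ∑ j ∈ T, p j i = 1 := by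
  letI := CStarAlgebra.spectralOrder B
  haveI := CStarAlgebra.spectralOrderedRing B
  -- scalar multiples of the `p j i` by nonnegative reals are nonneg
  have hterm : ∀ (r : ℝ), 0 ≤ r → ∀ j i, (0 : B) ≤ (r : ℂ) • p j i := by
    intro r hr j i
    have h := star_mul_self_nonneg (((Real.sqrt r : ℝ) : ℂ) • p j i)
    rw [star_smul, smul_mul_smul_comm] at h
    rw [Complex.star_def, Complex.conj_ofReal, hsa, ← Complex.ofReal_mul,
      Real.mul_self_sqrt hr, hidem] at h
    exact h
  have hp_nonneg : ∀ j i, (0 : B) ≤ p j i := by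
    intro j i
    have h := star_mul_self_nonneg (p j i)
    rwa [hsa, hidem] at h
  have hnorm1 : ‖(1 : B)‖ ≤ 1 := by
    have h := CStarRing.norm_star_mul_self (x := (1 : B))
    simp only [star_one, mul_one] at h
    nlinarith [norm_nonneg (1 : B)]
  have hpnorm : ∀ j i, p j i ≠ 0 → ‖p j i‖ = 1 := by
    intro j i h
    have h2 := CStarRing.norm_star_mul_self (x := p j i)
    rw [hsa, hidem] at h2
    have h3 : ‖p j i‖ ≠ 0 := norm_ne_zero_iff.mpr h
    exact (mul_left_cancel₀ h3 (by rw [mul_one, ← h2])).symm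
  intro N
  induction N with
  | zero =>
    intro T hcard _ _ i hi
    rw [Finset.card_eq_zero.mp (Nat.le_zero.mp hcard)] at hi
    exact absurd hi (Finset.notMem_empty i)
  | succ N ih =>
    intro T hcard hrows hinvT
    rcases T.eq_empty_or_nonempty with rfl | hT
    · intro i hi; exact absurd hi (Finset.notMem_empty i)
    set m : ℝ := T.inf' hT c with hm
    set S : Finset (Fin n) := T.filter (fun j => c j = m) with hS
    set T' : Finset (Fin n) := T.filter (fun j => ¬ c j = m) with hT'
    have hSsub : S ⊆ T := Finset.filter_subset _ _
    have hT'sub : T' ⊆ T := Finset.filter_subset _ _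
    obtain ⟨j0, hj0T, hj0m⟩ := T.exists_mem_eq_inf' hT c
    have hj0S : j0 ∈ S := Finset.mem_filter.mpr ⟨hj0T, hj0m.symm⟩
    have hm_pos : 0 < m := by rw [hm, hj0m]; exact hpos j0
    have hm_le : ∀ j ∈ T, m ≤ c j := fun j hj => Finset.inf'_le c hj
    -- Claim 1 : nonzero entries increase the weight
    have claim1 : ∀ i ∈ T, ∀ j ∈ T, p j i ≠ 0 → c j ≤ c i := by
      intro i hi j hj hne
      have hle : (c j : ℂ) • p j i ≤ (c i : ℂ) • (1 : B) := by
        rw [← hinvT i hi, ← Finset.add_sum_erase T _ hj]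
        exact le_add_of_nonneg_right
          (Finset.sum_nonneg fun k _ => hterm (c k) (hpos k).le k i)
      have hn := CStarAlgebra.norm_le_norm_of_nonneg_of_le
        (hterm (c j) (hpos j).le j i) hle
      rw [norm_smul, norm_smul, Complex.norm_real, Complex.norm_real,
        Real.norm_eq_abs, Real.norm_eq_abs, abs_of_pos (hpos j), abs_of_pos (hpos i),
        hpnorm j i hne, mul_one] at hn
      nlinarith [hpos i, norm_nonneg (1 : B)]
    -- Claim 2 : columns in `S` are supported on rows in `S`
    have claim2 : ∀ i ∈ S, ∀ j ∈ T, j ∉ S → p j i = 0 := by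
      intro i hi j hj hjS
      by_contra hne
      have h1 := claim1 i (hSsub hi) j hj hne
      have h2 : c i = m := (Finset.mem_filter.mp hi).2
      have h3 : c j = m := le_antisymm (h2 ▸ h1) (hm_le j hj)
      exact hjS (Finset.mem_filter.mpr ⟨hj, h3⟩)
    -- Claim 3 : columns in `S` sum to one over rows in `S`
    have claim3 : ∀ i ∈ S, ∑ j ∈ S, p j i = 1 := by
      intro i hi
      have hiT := hSsub hi
      have hsplit := Finset.sum_filter_add_sum_filter_not T (fun j => c j = m)
        (fun j => (c j : ℂ) • p j i)
      rw [hinvT i hiT] at hsplit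
      have hzero : ∑ j ∈ T', (c j : ℂ) • p j i = 0 := by
        apply Finset.sum_eq_zero
        intro j hj
        rw [claim2 i hi j (hT'sub hj) (by
          intro hjS
          exact (Finset.mem_filter.mp hj).2 (Finset.mem_filter.mp hjS).2), smul_zero]
      rw [hzero, add_zero] at hsplit
      have hciS : c i = m := (Finset.mem_filter.mp hi).2
      have hmain : (m : ℂ) • (∑ j ∈ S, p j i) = (m : ℂ) • (1 : B) := by
        rw [Finset.smul_sum]
        rw [hciS] at hsplit
        rw [← hsplit]
        apply Finset.sum_congr rfl
        intro j hj
        rw [(Finset.mem_filter.mp hj).2]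
      exact smul_right_injective B (by exact_mod_cast hm_pos.ne') hmain
    -- Claim 4 : rows in `S` are supported on columns in `S`
    have claim4 : ∀ j ∈ S, ∀ i ∈ T, i ∉ S → p j i = 0 := by
      have hdouble : ∑ j ∈ S, ∑ i ∈ T', p j i = 0 := by
        have h1 : ∑ j ∈ S, ∑ i ∈ T, p j i = S.card • (1 : B) := by
          rw [Finset.sum_congr rfl fun j hj => hrows j (hSsub hj), Finset.sum_const]
        have h2 : ∑ j ∈ S, ∑ i ∈ T, p j i
            = ∑ j ∈ S, ∑ i ∈ S, p j i + ∑ j ∈ S, ∑ i ∈ T', p j i := by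
          rw [← Finset.sum_add_distrib]
          apply Finset.sum_congr rfl
          intro j _
          exact (Finset.sum_filter_add_sum_filter_not T (fun i => c i = m) (p j)).symm
        have h3 : ∑ j ∈ S, ∑ i ∈ S, p j i = S.card • (1 : B) := by
          rw [Finset.sum_comm, Finset.sum_congr rfl fun i hi => claim3 i hi,
            Finset.sum_const]
        rw [h1, h3] at h2
        exact (add_eq_left.mp h2.symm)
      intro j hj i hi hiS
      have hiT' : i ∈ T' := Finset.mem_filter.mpr
        ⟨hi, fun h => hiS (Finset.mem_filter.mpr ⟨hi, h⟩)⟩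
      have hrow0 := (Finset.sum_eq_zero_iff_of_nonneg
        (fun j _ => Finset.sum_nonneg fun i _ => hp_nonneg j i)).mp hdouble j hj
      exact (Finset.sum_eq_zero_iff_of_nonneg
        (fun i _ => hp_nonneg j i)).mp hrow0 i hiT'
    -- the complement `T'` satisfies the induction hypotheses
    have hT'card : T'.card ≤ N := by
      have hlt : T' ⊂ T := Finset.ssubset_iff_of_subset hT'sub |>.mpr
        ⟨j0, hj0T, fun h => (Finset.mem_filter.mp h).2 hj0m.symm⟩
      have := Finset.card_lt_card hlt
      omega
    have hrows' : ∀ j ∈ T', ∑ i ∈ T', p j i = 1 := by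
      intro j hj
      have hsplit := Finset.sum_filter_add_sum_filter_not T (fun i => c i = m) (p j)
      rw [hrows j (hT'sub hj)] at hsplit
      have hzero : ∑ i ∈ S, p j i = 0 := by
        apply Finset.sum_eq_zero
        intro i hi
        exact claim2 i hi j (hT'sub hj)
          (fun h => (Finset.mem_filter.mp hj).2 (Finset.mem_filter.mp h).2)
      rw [hzero, zero_add] at hsplit
      exact hsplit
    have hinv' : ∀ i ∈ T', ∑ j ∈ T', (c j : ℂ) • p j i = (c i : ℂ) • (1 : B) := by
      intro i hi
      have hsplit := Finset.sum_filter_add_sum_filter_not T (fun j => c j = m)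
        (fun j => (c j : ℂ) • p j i)
      rw [hinvT i (hT'sub hi)] at hsplit
      have hzero : ∑ j ∈ S, (c j : ℂ) • p j i = 0 := by
        apply Finset.sum_eq_zero
        intro j hj
        rw [claim4 j hj i (hT'sub hi)
          (fun h => (Finset.mem_filter.mp hi).2 (Finset.mem_filter.mp h).2), smul_zero]
      rw [hzero, zero_add] at hsplit
      exact hsplit
    have hcol' := ih T' hT'card hrows' hinv'
    -- conclude
    intro i hi
    have hsplit := Finset.sum_filter_add_sum_filter_not T (fun j => c j = m)
      (fun j => p j i)
    by_cases hciS : c i = m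
    · have hiS : i ∈ S := Finset.mem_filter.mpr ⟨hi, hciS⟩
      have hzero : ∑ j ∈ T', p j i = 0 := Finset.sum_eq_zero fun j hj =>
        claim2 i hiS j (hT'sub hj)
          (fun h => (Finset.mem_filter.mp hj).2 (Finset.mem_filter.mp h).2)
      rw [← hsplit, hzero, add_zero]
      exact claim3 i hiS
    · have hiT' : i ∈ T' := Finset.mem_filter.mpr ⟨hi, hciS⟩
      have hzero : ∑ j ∈ S, p j i = 0 := Finset.sum_eq_zero fun j hj =>
        claim4 j hj i hi (fun h => hciS (Finset.mem_filter.mp h).2)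
      rw [← hsplit, hzero, zero_add]
      exact hcol' i hiT'

/-- a matrix of mutually row-orthogonal projections with row sums
equal to `1` which admits an invariant faithful state-like family of strictly
positive weights `c` has column sums equal to `1` as well; consequently it is a
magic unitary. -/
theorem magic_unitary_of_invariant_weights
    {B : Type*} [CStarAlgebra B]
    (n : ℕ) (p : Fin n → Fin n → B)
    (hsa : ∀ j i, star (p j i) = p j i)
    (hidem : ∀ j i, p j i * p j i = p j i)
    (horth : ∀ j i k, i ≠ k → p j i * p j k = 0)
    (hrow : ∀ j, ∑ i, p j i = 1)
    (c : Fin n → ℝ)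
    (hpos : ∀ i, 0 < c i)
    (hsum : ∑ i, c i = 1)
    (hinv : ∀ i, ∑ j, (c j : ℂ) • p j i = (c i : ℂ) • (1 : B)) :
    ∀ i, ∑ j, p j i = 1 := by
  intro i
  exact magic_aux p c hsa hidem hpos Finset.univ.card Finset.univ le_rfl
    (fun j _ => hrow j) (fun i _ => hinv i) i (Finset.mem_univ i)
end
end

section
/- Under the stated hypotheses, one has: p_{e,y} = 0 for y ≠ e and p_{e,e} = 1_B; p_{x,e} = 0 for x ≠ e and p_{e,e} = 1_B; and p_{x⁻¹,y⁻¹} = p_{x,y} for all x, y ∈ Γ. In particular p_{x,y}* = p_{x⁻¹,y⁻¹}, so the corresponding quantum family is a quantum family of automorphisms of Γ. -/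
noncomputable section

lemma aux_sum_star_mul_self_eq_zero {B : Type*} [CStarAlgebra B] {ι : Type*}
    (s : Finset ι) (a : ι → B) (h : ∑ i ∈ s, star (a i) * a i = 0) :
    ∀ i ∈ s, a i = 0 := by
  let _ := CStarAlgebra.spectralOrder B
  have _ := CStarAlgebra.spectralOrderedRing B
  intro i hi
  have h0 := (Finset.sum_eq_zero_iff_of_nonneg
    (fun j _ => star_mul_self_nonneg (a j))).mp h i hi
  exact (CStarRing.star_mul_self_eq_zero_iff (a i)).mp h0

/-- for a magic unitary `(p_{x,y})` over a finite group `Γ`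
satisfying `p_{x,yz} = Σ_u p_{u,y}·p_{u⁻¹x,z}`, one has `p_{e,y} = δ_{y,e}·1`,
`p_{x,e} = δ_{x,e}·1` and `p_{x⁻¹,y⁻¹} = p_{x,y}`; in particular
`p_{x,y}* = p_{x⁻¹,y⁻¹}`, so the corresponding quantum family is a quantum
family of automorphisms of `Γ`. -/
theorem convolution_preserving_action_is_by_automorphisms
    {Γ : Type*} [Group Γ] [Fintype Γ] [DecidableEq Γ]
    {B : Type*} [CStarAlgebra B]
    (p : Γ → Γ → B)
    (hsa : ∀ x y : Γ, star (p x y) = p x y)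
    (hidem : ∀ x y : Γ, p x y * p x y = p x y)
    (hrow : ∀ x : Γ, ∑ y : Γ, p x y = 1)
    (hcol : ∀ y : Γ, ∑ x : Γ, p x y = 1)
    (hconv : ∀ x y z : Γ, p x (y * z) = ∑ u : Γ, p u y * p (u⁻¹ * x) z)
    :
    (∀ y : Γ, p 1 y = if y = 1 then (1 : B) else 0)
      ∧ (∀ x : Γ, p x 1 = if x = 1 then (1 : B) else 0)
      ∧ (∀ x y : Γ, p x⁻¹ y⁻¹ = p x y)
      ∧ (∀ x y : Γ, star (p x y) = p x⁻¹ y⁻¹) := by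
  -- column orthogonality
  have colorth : ∀ y x x' : Γ, x ≠ x' → p x y * p x' y = 0 := by
    intro y x x' hne
    have hterm : ∀ u : Γ, star (p u y * p x' y) * (p u y * p x' y)
        = p x' y * p u y * p x' y := by
      intro u
      rw [star_mul, hsa, hsa]
      calc p x' y * p u y * (p u y * p x' y)
          = p x' y * (p u y * p u y) * p x' y := by simp only [mul_assoc]
        _ = p x' y * p u y * p x' y := by rw [hidem]
    have hsum : ∑ u : Γ, star (p u y * p x' y) * (p u y * p x' y) = p x' y := by
      simp_rw [hterm]
      calc ∑ u : Γ, p x' y * p u y * p x' y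
          = (p x' y * ∑ u : Γ, p u y) * p x' y := by
            rw [Finset.mul_sum, Finset.sum_mul]
        _ = p x' y := by rw [hcol, mul_one, hidem]
    have hsplit : ∑ u ∈ Finset.univ.erase x',
        star (p u y * p x' y) * (p u y * p x' y) = 0 := by
      rw [Finset.sum_erase_eq_sub (Finset.mem_univ x'), hsum]
      have hx' : star (p x' y * p x' y) * (p x' y * p x' y) = p x' y := by
        rw [hidem, hsa, hidem]
      rw [hx', sub_self]
    exact aux_sum_star_mul_self_eq_zero _ _ hsplit x
      (Finset.mem_erase.mpr ⟨hne, Finset.mem_univ x⟩)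
  -- row orthogonality
  have roworth : ∀ x y y' : Γ, y ≠ y' → p x y * p x y' = 0 := by
    intro x y y' hne
    have hterm : ∀ v : Γ, star (p x v * p x y') * (p x v * p x y')
        = p x y' * p x v * p x y' := by
      intro v
      rw [star_mul, hsa, hsa]
      calc p x y' * p x v * (p x v * p x y')
          = p x y' * (p x v * p x v) * p x y' := by simp only [mul_assoc]
        _ = p x y' * p x v * p x y' := by rw [hidem]
    have hsum : ∑ v : Γ, star (p x v * p x y') * (p x v * p x y') = p x y' := by
      simp_rw [hterm]
      calc ∑ v : Γ, p x y' * p x v * p x y'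
          = (p x y' * ∑ v : Γ, p x v) * p x y' := by
            rw [Finset.mul_sum, Finset.sum_mul]
        _ = p x y' := by rw [hrow, mul_one, hidem]
    have hsplit : ∑ v ∈ Finset.univ.erase y',
        star (p x v * p x y') * (p x v * p x y') = 0 := by
      rw [Finset.sum_erase_eq_sub (Finset.mem_univ y'), hsum]
      have hy' : star (p x y' * p x y') * (p x y' * p x y') = p x y' := by
        rw [hidem, hsa, hidem]
      rw [hy', sub_self]
    exact aux_sum_star_mul_self_eq_zero _ _ hsplit y
      (Finset.mem_erase.mpr ⟨hne, Finset.mem_univ y⟩)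
  -- p x 1 = p x 1 * p 1 1
  have habs : ∀ x : Γ, p x 1 = p x 1 * p 1 1 := by
    intro x
    have h := hconv x 1 1
    rw [one_mul] at h
    calc p x 1 = p x 1 * p x 1 := (hidem _ _).symm
      _ = p x 1 * ∑ u : Γ, p u 1 * p (u⁻¹ * x) 1 := by rw [← h]
      _ = ∑ u : Γ, p x 1 * p u 1 * p (u⁻¹ * x) 1 := by
          rw [Finset.mul_sum]; simp_rw [mul_assoc]
      _ = p x 1 * p 1 1 := by
          rw [Finset.sum_eq_single x]
          · rw [hidem, inv_mul_cancel]
          · intro u _ hu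
            rw [colorth 1 x u (Ne.symm hu), zero_mul]
          · simp
  -- p 1 1 = 1
  have h11 : p 1 1 = (1 : B) := by
    calc p 1 1 = 1 * p 1 1 := (one_mul _).symm
      _ = (∑ x : Γ, p x 1) * p 1 1 := by rw [hcol]
      _ = ∑ x : Γ, p x 1 * p 1 1 := Finset.sum_mul _ _ _
      _ = ∑ x : Γ, p x 1 := by simp_rw [← habs]
      _ = 1 := hcol 1
  have hx1 : ∀ x : Γ, p x 1 = if x = 1 then (1 : B) else 0 := by
    intro x
    by_cases hx : x = 1
    · simp [hx, h11]
    · simp only [hx, if_false]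
      calc p x 1 = p x 1 * p 1 1 := by rw [h11, mul_one]
        _ = 0 := colorth 1 x 1 hx
  have h1y : ∀ y : Γ, p 1 y = if y = 1 then (1 : B) else 0 := by
    intro y
    by_cases hy : y = 1
    · simp [hy, h11]
    · simp only [hy, if_false]
      calc p 1 y = p 1 y * p 1 1 := by rw [h11, mul_one]
        _ = 0 := roworth 1 y 1 hy
  -- key absorption: p w y * p w⁻¹ y⁻¹ = p w y
  have hkey : ∀ w y : Γ, p w y * p w⁻¹ y⁻¹ = p w y := by
    intro w y
    have h := hconv 1 y y⁻¹
    rw [mul_inv_cancel, h11] at h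
    have hstep : p w y = p w y * p w⁻¹ y⁻¹ := by
      calc p w y = p w y * 1 := (mul_one _).symm
        _ = p w y * ∑ u : Γ, p u y * p (u⁻¹ * 1) y⁻¹ := by rw [← h]
        _ = ∑ u : Γ, p w y * p u y * p (u⁻¹ * 1) y⁻¹ := by
            rw [Finset.mul_sum]; simp_rw [mul_assoc]
        _ = p w y * p w⁻¹ y⁻¹ := by
            rw [Finset.sum_eq_single w]
            · rw [hidem, mul_one]
            · intro u _ hu
              rw [colorth y w u (Ne.symm hu), zero_mul]
            · simp
    exact hstep.symm
  have hinv : ∀ x y : Γ, p x⁻¹ y⁻¹ = p x y := by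
    intro x y
    have h1 := hkey x⁻¹ y⁻¹
    rw [inv_inv, inv_inv] at h1
    have h2 := congrArg star (hkey x y)
    rw [star_mul, hsa, hsa] at h2
    rw [← h1, h2]
  exact ⟨h1y, hx1, hinv, fun x y => by rw [hsa, hinv]⟩
end
end

section
/- Under the stated hypotheses, the following hold for all x, y, z, t, u ∈ Γ and n ∈ ℕ: (1) if the order of x differs from the order of y then p_{x,y} = 0; (2) p_{x,y}·p_{x^n,z} = p_{x^n,z}·p_{x,y}; (3) p_{y,x}·p_{z,x^n} = p_{z,x^n}·p_{y,x}; (4) p_{x,y}·p_{x^n,y^n} = p_{x,y}, i.e. p_{x,y} ≤ p_{x^n,y^n} as projections in B. -/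
noncomputable section

/-- Auxiliary: for a family of self-adjoint idempotents in a unital C*-algebra
summing to `1`, distinct members are orthogonal. -/
lemma magic_orth_aux {Γ : Type*} [Fintype Γ] [DecidableEq Γ]
    {B : Type*} [CStarAlgebra B]
    (q : Γ → B) (hq_sa : ∀ i, star (q i) = q i) (hq_idem : ∀ i, q i * q i = q i)
    (hq_sum : ∑ i : Γ, q i = 1) {i j : Γ} (hij : j ≠ i) : q j * q i = 0 := by
  letI : PartialOrder B := CStarAlgebra.spectralOrder B
  haveI : StarOrderedRing B := CStarAlgebra.spectralOrderedRing B
  have hterm : ∀ w : Γ, q i * q w * q i = star (q w * q i) * (q w * q i) := by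
    intro w
    rw [star_mul, hq_sa, hq_sa]
    calc q i * q w * q i = q i * (q w * q w) * q i := by rw [hq_idem]
      _ = q i * q w * (q w * q i) := by noncomm_ring
  have hsum : ∑ w : Γ, q i * q w * q i = q i := by
    have h1 : ∑ w : Γ, q i * q w * q i = q i * (∑ w : Γ, q w) * q i := by
      rw [Finset.mul_sum, Finset.sum_mul]
    rw [h1, hq_sum, mul_one, hq_idem]
  have herase : ∑ w ∈ Finset.univ.erase i, q i * q w * q i = 0 := by
    have h2 : q i * q i * q i + ∑ w ∈ Finset.univ.erase i, q i * q w * q i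
        = ∑ w : Γ, q i * q w * q i :=
      Finset.add_sum_erase Finset.univ (fun w => q i * q w * q i) (Finset.mem_univ i)
    rw [hsum, hq_idem, hq_idem] at h2
    exact add_left_cancel (h2.trans (add_zero (q i)).symm)
  have hnn : ∀ w ∈ Finset.univ.erase i, (0 : B) ≤ q i * q w * q i := by
    intro w _
    rw [hterm w]
    exact star_mul_self_nonneg _
  have hj : q i * q j * q i = 0 :=
    (Finset.sum_eq_zero_iff_of_nonneg hnn).mp herase j
      (Finset.mem_erase.mpr ⟨hij, Finset.mem_univ j⟩)
  have : star (q j * q i) * (q j * q i) = 0 := by rw [← hterm j]; exact hj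
  exact (CStarRing.star_mul_self_eq_zero_iff _).mp this

/-- quantum automorphisms preserve the order of elements:
(1) `p_{x,y} = 0` if `ord(x) ≠ ord(y)`;
(2) `p_{x,y}` commutes with `p_{x^n,z}`;
(3) `p_{y,x}` commutes with `p_{z,x^n}`;
(4) `p_{x,y}·p_{x^n,y^n} = p_{x,y}`, i.e. `p_{x,y} ≤ p_{x^n,y^n}`. -/
theorem quantum_automorphisms_preserve_order
    {Γ : Type*} [Group Γ] [Fintype Γ] [DecidableEq Γ]
    {B : Type*} [CStarAlgebra B]
    (p : Γ → Γ → B)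
    (hsa : ∀ x y : Γ, star (p x y) = p x y)
    (hidem : ∀ x y : Γ, p x y * p x y = p x y)
    (hrow : ∀ x : Γ, ∑ y : Γ, p x y = 1)
    (hcol : ∀ y : Γ, ∑ x : Γ, p x y = 1)
    (hconv : ∀ x y z : Γ, p x (y * z) = ∑ u : Γ, p u y * p (u⁻¹ * x) z)
    :
    (∀ x y : Γ, orderOf x ≠ orderOf y → p x y = 0)
      ∧ (∀ (x y z : Γ) (n : ℕ), p x y * p (x ^ n) z = p (x ^ n) z * p x y)
      ∧ (∀ (x y z : Γ) (n : ℕ), p y x * p z (x ^ n) = p z (x ^ n) * p y x)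
      ∧ (∀ (x y : Γ) (n : ℕ), p x y * p (x ^ n) (y ^ n) = p x y) := by
  classical
  -- orthogonality within a row: same first index, different second indices
  have rowO : ∀ x y z : Γ, z ≠ y → p x z * p x y = 0 := by
    intro x y z h
    exact magic_orth_aux (fun w => p x w) (fun w => hsa x w) (fun w => hidem x w)
      (hrow x) h
  -- orthogonality within a column: same second index, different first indices
  have colO : ∀ y x z : Γ, z ≠ x → p z y * p x y = 0 := by
    intro y x z h
    exact magic_orth_aux (fun w => p w y) (fun w => hsa w y) (fun w => hidem w y)
      (hcol y) h
  -- the starred convolution formula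
  have hconv' : ∀ x y z : Γ, p x (y * z) = ∑ v : Γ, p v z * p (x * v⁻¹) y := by
    intro x y z
    have h1 : p x (y * z) = star (p x (y * z)) := (hsa _ _).symm
    rw [h1, hconv, star_sum]
    have h2 : ∀ u : Γ, star (p u y * p (u⁻¹ * x) z) = p (u⁻¹ * x) z * p u y := by
      intro u; rw [star_mul, hsa, hsa]
    simp only [h2]
    exact Fintype.sum_equiv ((Equiv.inv Γ).trans (Equiv.mulRight x))
      (fun u => p (u⁻¹ * x) z * p u y) (fun v => p v z * p (x * v⁻¹) y)
      (fun u => by simp [mul_inv_rev])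
  -- the four absorption identities
  have hL : ∀ v x y z : Γ, p v y * p x (y * z) = p v y * p (v⁻¹ * x) z := by
    intro v x y z
    rw [hconv, Finset.mul_sum]
    rw [Finset.sum_eq_single v]
    · rw [← mul_assoc, hidem]
    · intro u _ hu
      rw [← mul_assoc, colO y u v hu.symm, zero_mul]
    · intro h; exact absurd (Finset.mem_univ v) h
  have hR : ∀ x y z w : Γ, p x (y * z) * p w z = p (x * w⁻¹) y * p w z := by
    intro x y z w
    rw [hconv, Finset.sum_mul]
    rw [Finset.sum_eq_single (x * w⁻¹)]
    · have hv : (x * w⁻¹)⁻¹ * x = w := by group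
      rw [hv, mul_assoc, hidem]
    · intro u _ hu
      have hne : u⁻¹ * x ≠ w := by
        intro hc
        apply hu
        rw [← hc]; group
      rw [mul_assoc, colO z w (u⁻¹ * x) hne, mul_zero]
    · intro h; exact absurd (Finset.mem_univ _) h
  have hL' : ∀ w x y z : Γ, p w z * p x (y * z) = p w z * p (x * w⁻¹) y := by
    intro w x y z
    rw [hconv', Finset.mul_sum]
    rw [Finset.sum_eq_single w]
    · rw [← mul_assoc, hidem]
    · intro u _ hu
      rw [← mul_assoc, colO z u w hu.symm, zero_mul]
    · intro h; exact absurd (Finset.mem_univ w) h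
  have hR' : ∀ s x y z : Γ, p x (y * z) * p s y = p (s⁻¹ * x) z * p s y := by
    intro s x y z
    rw [hconv', Finset.sum_mul]
    rw [Finset.sum_eq_single (s⁻¹ * x)]
    · have hv : x * (s⁻¹ * x)⁻¹ = s := by group
      rw [hv, mul_assoc, hidem]
    · intro u _ hu
      have hne : x * u⁻¹ ≠ s := by
        intro hc
        apply hu
        rw [← hc]; group
      rw [mul_assoc, colO y s (x * u⁻¹) hne, mul_zero]
    · intro h; exact absurd (Finset.mem_univ _) h
  -- p 1 1 = 1
  have key : ∀ x y : Γ, p x y = p x y * p (1 : Γ) (1 : Γ) := by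
    intro x y
    have h := hL x x y 1
    rw [mul_one, hidem, inv_mul_cancel] at h
    exact h
  have p11 : p (1 : Γ) (1 : Γ) = 1 := by
    calc p (1 : Γ) (1 : Γ) = (∑ x : Γ, p x 1) * p (1 : Γ) (1 : Γ) := by
          rw [hcol, one_mul]
      _ = ∑ x : Γ, p x 1 * p (1 : Γ) (1 : Γ) := by rw [Finset.sum_mul]
      _ = ∑ x : Γ, p x 1 := by
          apply Finset.sum_congr rfl
          intro x _
          exact (key x 1).symm
      _ = 1 := hcol 1
  have p1z : ∀ z : Γ, z ≠ 1 → p (1 : Γ) z = 0 := by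
    intro z hz
    rw [key 1 z]
    exact rowO 1 1 z hz
  have pz1 : ∀ z : Γ, z ≠ 1 → p z (1 : Γ) = 0 := by
    intro z hz
    rw [key z 1]
    exact colO 1 1 z hz
  -- zeroth power commutes with everything
  have comm0a : ∀ (z : Γ) (b : B), p (1 : Γ) z * b = b * p (1 : Γ) z := by
    intro z b
    by_cases hz : z = 1
    · rw [hz, p11, one_mul, mul_one]
    · rw [p1z z hz, zero_mul, mul_zero]
  have comm0b : ∀ (z : Γ) (b : B), p z (1 : Γ) * b = b * p z (1 : Γ) := by
    intro z b
    by_cases hz : z = 1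
    · rw [hz, p11, one_mul, mul_one]
    · rw [pz1 z hz, zero_mul, mul_zero]
  -- (2)
  have comm2 : ∀ (x y z : Γ) (n : ℕ), p x y * p (x ^ n) z = p (x ^ n) z * p x y := by
    intro x y z n
    induction n generalizing z with
    | zero => rw [pow_zero]; exact (comm0a z (p x y)).symm
    | succ n ih =>
      have e1 : p x y * p (x ^ (n + 1)) z = p x y * p (x ^ n) (y⁻¹ * z) := by
        have h := hL x (x ^ (n + 1)) y (y⁻¹ * z)
        rw [mul_inv_cancel_left] at h
        rw [h, pow_succ' x n, inv_mul_cancel_left]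
      have e2 : p (x ^ (n + 1)) z * p x y = p (x ^ n) (y⁻¹ * z) * p x y := by
        have h := hR' x (x ^ (n + 1)) y (y⁻¹ * z)
        rw [mul_inv_cancel_left] at h
        rw [h, pow_succ' x n, inv_mul_cancel_left]
      rw [e1, e2, ih]
  -- (3)
  have comm3 : ∀ (x y z : Γ) (n : ℕ), p y x * p z (x ^ n) = p z (x ^ n) * p y x := by
    intro x y z n
    induction n generalizing z with
    | zero => rw [pow_zero]; exact (comm0b z (p y x)).symm
    | succ n ih =>
      have e1 : p y x * p z (x ^ (n + 1)) = p y x * p (z * y⁻¹) (x ^ n) := by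
        rw [pow_succ x n]
        exact hL' y z (x ^ n) x
      have e2 : p z (x ^ (n + 1)) * p y x = p (z * y⁻¹) (x ^ n) * p y x := by
        rw [pow_succ x n]
        exact hR z (x ^ n) x y
      rw [e1, e2, ih]
  -- (4)
  have ord4 : ∀ (x y : Γ) (n : ℕ), p x y * p (x ^ n) (y ^ n) = p x y := by
    intro x y n
    induction n with
    | zero => rw [pow_zero, pow_zero, p11, mul_one]
    | succ n ih =>
      have h := hL x (x ^ (n + 1)) y (y ^ n)
      rw [← pow_succ' y n] at h
      rw [h, pow_succ' x n, inv_mul_cancel_left, ih]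
  -- the reversed version of (4)
  have ord4' : ∀ (x y : Γ) (n : ℕ), p (x ^ n) (y ^ n) * p x y = p x y := by
    intro x y n
    induction n with
    | zero => rw [pow_zero, pow_zero, p11, one_mul]
    | succ n ih =>
      have e : x ^ (n + 1) * x⁻¹ = x ^ n := by rw [pow_succ, mul_inv_cancel_right]
      have h := hR (x ^ (n + 1)) (y ^ n) y x
      rw [← pow_succ y n, e] at h
      rw [h, ih]
  refine ⟨?_, comm2, comm3, ord4⟩
  -- (1)
  intro x y hne
  by_cases hy : y ^ orderOf x = 1
  · by_cases hx : x ^ orderOf y = 1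
    · exact absurd (Nat.dvd_antisymm (orderOf_dvd_of_pow_eq_one hx)
        (orderOf_dvd_of_pow_eq_one hy)) hne
    · have h := ord4' x y (orderOf y)
      rw [pow_orderOf_eq_one y] at h
      rw [← h, pz1 _ hx, zero_mul]
  · have h := ord4 x y (orderOf x)
    rw [pow_orderOf_eq_one x] at h
    rw [← h, p1z _ hy, mul_zero]
end
end

section
/- Suppose in addition that Γ is cyclic. Then all the elements p_{x,y} commute with one another: p_{x,y}·p_{z,t} = p_{z,t}·p_{x,y} for all x, y, z, t ∈ Γ. (This is the key fact showing that the quantum automorphism group of a finite cyclic group is classical.) -/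
noncomputable section

/-- In a unital C*-algebra, self-adjoint idempotents summing to `1` are
pairwise orthogonal. -/
theorem sum_one_projections_orthogonal
    {B : Type*} [CStarAlgebra B] {Γ : Type*} [Fintype Γ] [DecidableEq Γ]
    (q : Γ → B) (hsa : ∀ u, star (q u) = q u) (hidem : ∀ u, q u * q u = q u)
    (hsum : ∑ u, q u = 1) : ∀ u v, u ≠ v → q u * q v = 0 := by
  letI := CStarAlgebra.spectralOrder B
  haveI := CStarAlgebra.spectralOrderedRing B
  intro u v huv
  have star_form : ∀ w, star (q w * q v) * (q w * q v) = q v * q w * q v := by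
    intro w
    rw [star_mul, hsa, hsa, mul_assoc, ← mul_assoc (q w), hidem, ← mul_assoc]
  have h1 : ∑ w, q v * q w * q v = q v := by
    rw [← Finset.sum_mul, ← Finset.mul_sum, hsum, mul_one, hidem]
  have h2 : ∑ w ∈ Finset.univ.erase v, q v * q w * q v = 0 := by
    have h := Finset.add_sum_erase Finset.univ (fun w => q v * q w * q v) (Finset.mem_univ v)
    rw [h1] at h
    simp only [hidem] at h
    exact (add_eq_left).mp h
  have h4 := (Finset.sum_eq_zero_iff_of_nonneg (fun w _ => by
      rw [← star_form w]; exact star_mul_self_nonneg _)).mp h2 u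
      (Finset.mem_erase.mpr ⟨huv, Finset.mem_univ u⟩)
  rw [← star_form u] at h4
  exact CStarRing.star_mul_self_eq_zero_iff _ |>.mp h4

/-- if `Γ` is moreover cyclic, then all the entries of the magic
unitary `(p_{x,y})` commute with one another (so the quantum automorphism group
of a finite cyclic group is classical). -/
theorem cyclic_group_entries_commute
    {Γ : Type*} [Group Γ] [Fintype Γ] [DecidableEq Γ]
    {B : Type*} [CStarAlgebra B]
    (p : Γ → Γ → B)
    (hsa : ∀ x y : Γ, star (p x y) = p x y)
    (hidem : ∀ x y : Γ, p x y * p x y = p x y)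
    (hrow : ∀ x : Γ, ∑ y : Γ, p x y = 1)
    (hcol : ∀ y : Γ, ∑ x : Γ, p x y = 1)
    (hconv : ∀ x y z : Γ, p x (y * z) = ∑ u : Γ, p u y * p (u⁻¹ * x) z)
    [IsCyclic Γ] :
    ∀ x y z t : Γ, p x y * p z t = p z t * p x y := by
  -- entries in a fixed column are pairwise orthogonal projections
  have horth : ∀ (y u v : Γ), u ≠ v → p u y * p v y = 0 := fun y =>
    sum_one_projections_orthogonal (fun u => p u y) (fun u => hsa u y)
      (fun u => hidem u y) (hcol y)
  obtain ⟨g, hg⟩ := IsCyclic.exists_generator (α := Γ)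
  -- anything commuting with the column of the generator commutes with everything
  have key : ∀ a : B, (∀ u : Γ, a * p u g = p u g * a) →
      ∀ x y : Γ, a * p x y = p x y * a := by
    intro a ha
    have hk : ∀ (k : ℕ) (x : Γ), a * p x (g ^ (k + 1)) = p x (g ^ (k + 1)) * a := by
      intro k
      induction k with
      | zero => intro x; simpa using ha x
      | succ k ih =>
        intro x
        have hx : p x (g ^ (k + 2)) = ∑ u : Γ, p u g * p (u⁻¹ * x) (g ^ (k + 1)) := by
          have : (g : Γ) ^ (k + 2) = g * g ^ (k + 1) := by
            rw [pow_succ']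
          rw [this]
          exact hconv x g (g ^ (k + 1))
        rw [hx, Finset.mul_sum, Finset.sum_mul]
        refine Finset.sum_congr rfl fun u _ => ?_
        rw [← mul_assoc, ha u, mul_assoc, ih, ← mul_assoc]
    intro x y
    obtain ⟨k, hky0⟩ := (mem_powers_iff_mem_zpowers).mpr (hg y)
    have hky : g ^ k = y := hky0
    have hy : y = g ^ ((k + orderOf g - 1) + 1) := by
      have h1 : 1 ≤ orderOf g := orderOf_pos g
      rw [Nat.sub_add_cancel (le_add_of_nonneg_of_le (Nat.zero_le k) h1),
        pow_add, pow_orderOf_eq_one, mul_one, hky]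
    rw [hy]
    exact hk _ x
  -- each generator-column entry commutes with everything
  have colcomm : ∀ (u z t : Γ), p u g * p z t = p z t * p u g := by
    intro u z t
    refine key (p u g) (fun v => ?_) z t
    rcases eq_or_ne u v with rfl | h
    · rfl
    · rw [horth g u v h, horth g v u h.symm]
  intro x y z t
  exact (key (p z t) (fun u => (colcomm u z t).symm) x y).symm
end
end
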